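/- arXiv:1810.03178 — 2 statements merged into one kernel-verified Lean document; each statement's English description precedes it below -/
import Mathlib

section
/- Let A be a type, S the free semiring on A, and E a set of elements of S. For all p, q, r ∈ S, if r ≼ p and r ≼ q, then there exists s ∈ S such that p ≼ s and q ≼ s. -/
/-- The free semiring on the alphabet `A`, realized as the monoid algebra of the
free monoid on `A` with natural number coefficients. -/
abbrev FreeSemiring' (A : Type*) := MonoidAlgebra ℕ (FreeMonoid A)

/-- The monomial corresponding to a word `u`. -/
noncomputable def mono {A : Type*} (u : FreeMonoid A) : FreeSemiring' A :=
  MonoidAlgebra.of ℕ (FreeMonoid A) u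

/-- `x` is a single expansion of the monomial `[u]`: it has the form `[v] * e * [w]`
with `e ∈ E` and `u = v * w`. -/
def IsSingleExpansionOfMonomial {A : Type*} (E : Set (FreeSemiring' A))
    (u : FreeMonoid A) (x : FreeSemiring' A) : Prop :=
  ∃ (v w : FreeMonoid A) (e : FreeSemiring' A),
    e ∈ E ∧ u = v * w ∧ x = mono v * e * mono w

/-- `p ≼ q`: `q` is obtained from `p` by applying a single expansion step to a subset
of the summands of `p`; i.e. `p = Σᵢ pᵢ` is a sum of monomials and `q = Σᵢ qᵢ` where
each `qᵢ` equals `pᵢ` or is a single expansion of `pᵢ`. -/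
def Preexp {A : Type*} (E : Set (FreeSemiring' A)) (p q : FreeSemiring' A) : Prop :=
  ∃ (N : ℕ) (u : Fin N → FreeMonoid A) (x : Fin N → FreeSemiring' A),
    p = ∑ i, mono (u i) ∧ q = ∑ i, x i ∧
    ∀ i, x i = mono (u i) ∨ IsSingleExpansionOfMonomial E (u i) (x i)

/-!
The multiset of monomials of `r` is unique, since `S` is additively the free commutative monoid
on words. So the two steps `r ≼ p` and `r ≼ q` act on the same monomials, and it suffices to
join the two results monomial by monomial and add up. Two single expansions `[v] e [w]` and
`[v'] e' [w']` of the same word `v w = v' w'` are joined by inserting both `e` and `e'`, which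
sit at compatible positions: if, say, `v' = v t` and `w = t w'`, both expand to `[v] e [t] e' [w']`.
-/

section

variable {A : Type*}

lemma mono_mul (v w : FreeMonoid A) : mono (v * w) = mono v * mono w :=
  map_mul (MonoidAlgebra.of ℕ (FreeMonoid A)) v w

noncomputable def sumMonoEquiv : Multiset (FreeMonoid A) ≃+ FreeSemiring' A := by
  classical exact Multiset.toFinsupp.trans MonoidAlgebra.coeffAddEquiv.symm

lemma sumMonoEquiv_apply (m : Multiset (FreeMonoid A)) :
    sumMonoEquiv m = (m.map mono).sum := by
  induction m using Multiset.induction with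
  | empty => simp
  | cons u m ih =>
    rw [← Multiset.singleton_add, map_add, ih, Multiset.map_add, Multiset.sum_add,
      Multiset.map_singleton, Multiset.sum_singleton]
    congr 1
    classical
    simp [sumMonoEquiv, mono, MonoidAlgebra.of_apply]

lemma FreeMonoid.exists_of_mul_eq_mul {v w v' w' : FreeMonoid A} (h : v * w = v' * w') :
    ∃ t, (v' = v * t ∧ w = t * w') ∨ (v = v' * t ∧ w' = t * w) := by
  have h' := congrArg FreeMonoid.toList h
  simp only [FreeMonoid.toList_mul] at h'
  rcases List.append_eq_append_iff.mp h' with ⟨t, hv, hw⟩ | ⟨t, hv, hw⟩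
  · exact ⟨.ofList t, .inl ⟨congrArg FreeMonoid.ofList hv, congrArg FreeMonoid.ofList hw⟩⟩
  · exact ⟨.ofList t, .inr ⟨congrArg FreeMonoid.ofList hv, congrArg FreeMonoid.ofList hw⟩⟩

def IsSingleExpansionOrEq (E : Set (FreeSemiring' A)) (u : FreeMonoid A)
    (x : FreeSemiring' A) : Prop :=
  x = mono u ∨ IsSingleExpansionOfMonomial E u x

namespace Preexp

variable {E : Set (FreeSemiring' A)}

lemma zero : Preexp E 0 0 :=
  ⟨0, Fin.elim0, Fin.elim0, by simp, by simp, fun i => i.elim0⟩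

lemma add {p q p' q' : FreeSemiring' A} (h : Preexp E p q) (h' : Preexp E p' q') :
    Preexp E (p + p') (q + q') := by
  obtain ⟨N, u, x, rfl, rfl, hx⟩ := h
  obtain ⟨N', u', x', rfl, rfl, hx'⟩ := h'
  refine ⟨N + N', Fin.append u u', Fin.append x x', ?_, ?_, Fin.addCases ?_ ?_⟩ <;>
    simp [Fin.sum_univ_add, hx, hx']

lemma of_isSingleExpansionOrEq {u : FreeMonoid A} {x : FreeSemiring' A}
    (h : IsSingleExpansionOrEq E u x) : Preexp E (mono u) x :=
  ⟨1, fun _ => u, fun _ => x, by simp, by simp, fun _ => h⟩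

lemma multiset_sum_map {ι : Type*} (s : Multiset ι) {f g : ι → FreeSemiring' A}
    (h : ∀ i ∈ s, Preexp E (f i) (g i)) : Preexp E (s.map f).sum (s.map g).sum := by
  induction s using Multiset.induction with
  | empty => exact zero
  | cons i s ih =>
    simp only [Multiset.map_cons, Multiset.sum_cons]
    exact (h i (Multiset.mem_cons_self i s)).add (ih fun j hj => h j (Multiset.mem_cons_of_mem hj))

lemma refl (p : FreeSemiring' A) : Preexp E p p := by
  obtain ⟨m, rfl⟩ := sumMonoEquiv.surjective p
  rw [sumMonoEquiv_apply]
  exact multiset_sum_map m fun u _ => of_isSingleExpansionOrEq (.inl rfl)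

lemma exists_rel {p q : FreeSemiring' A} (h : Preexp E p q) :
    ∃ (m : Multiset (FreeMonoid A)) (n : Multiset (FreeSemiring' A)),
      p = (m.map mono).sum ∧ q = n.sum ∧ m.Rel (IsSingleExpansionOrEq E) n := by
  obtain ⟨N, u, x, rfl, rfl, hx⟩ := h
  refine ⟨Finset.univ.val.map u, Finset.univ.val.map x, ?_, ?_, ?_⟩
  · rw [Finset.sum_eq_multiset_sum, Multiset.map_map]
    rfl
  · rw [Finset.sum_eq_multiset_sum]
  · exact Multiset.rel_map.mpr (Multiset.rel_refl_of_refl_on fun i _ => hx i)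

lemma mul_mono_expand (a : FreeSemiring' A) {e : FreeSemiring' A} (he : e ∈ E)
    (w : FreeMonoid A) : Preexp E (a * mono w) (a * e * mono w) := by
  obtain ⟨m, rfl⟩ := sumMonoEquiv.surjective a
  simp only [sumMonoEquiv_apply, ← Multiset.sum_map_mul_right]
  exact multiset_sum_map m fun u _ =>
    mono_mul u w ▸ of_isSingleExpansionOrEq (.inr ⟨u, w, e, he, rfl, rfl⟩)

lemma mono_mul_expand (v : FreeMonoid A) {e : FreeSemiring' A} (he : e ∈ E)
    (b : FreeSemiring' A) : Preexp E (mono v * b) (mono v * e * b) := by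
  obtain ⟨m, rfl⟩ := sumMonoEquiv.surjective b
  simp only [sumMonoEquiv_apply, ← Multiset.sum_map_mul_left, mul_assoc]
  exact multiset_sum_map m fun u _ =>
    mono_mul v u ▸ of_isSingleExpansionOrEq (.inr ⟨v, u, e, he, rfl, (mul_assoc _ _ _).symm⟩)

end Preexp

variable {E : Set (FreeSemiring' A)}

lemma join_preexp_of_overlap {v t w : FreeMonoid A} {e e' : FreeSemiring' A}
    (he : e ∈ E) (he' : e' ∈ E) :
    Relation.Join (Preexp E) (mono v * e * mono (t * w)) (mono (v * t) * e' * mono w) :=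
  ⟨mono v * e * mono t * e' * mono w,
    by simpa only [mono_mul, mul_assoc] using Preexp.mul_mono_expand (mono v * e * mono t) he' w,
    by simpa only [mono_mul, mul_assoc] using Preexp.mono_mul_expand v he (mono t * e' * mono w)⟩

lemma join_preexp_of_isSingleExpansionOfMonomial {u : FreeMonoid A} {x y : FreeSemiring' A}
    (hx : IsSingleExpansionOfMonomial E u x) (hy : IsSingleExpansionOfMonomial E u y) :
    Relation.Join (Preexp E) x y := by
  obtain ⟨v, w, e, he, rfl, rfl⟩ := hx
  obtain ⟨v', w', e', he', hvw, rfl⟩ := hy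
  obtain ⟨t, ⟨rfl, rfl⟩ | ⟨rfl, rfl⟩⟩ := FreeMonoid.exists_of_mul_eq_mul hvw
  · exact join_preexp_of_overlap he he'
  · obtain ⟨z, hy, hx⟩ := join_preexp_of_overlap he' he
    exact ⟨z, hx, hy⟩

lemma join_preexp_of_isSingleExpansionOrEq {u : FreeMonoid A} {x y : FreeSemiring' A}
    (hx : IsSingleExpansionOrEq E u x) (hy : IsSingleExpansionOrEq E u y) :
    Relation.Join (Preexp E) x y := by
  rcases hx with rfl | hx
  · exact ⟨y, Preexp.of_isSingleExpansionOrEq hy, Preexp.refl y⟩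
  rcases hy with rfl | hy
  · exact ⟨x, Preexp.refl x, Preexp.of_isSingleExpansionOrEq (.inr hx)⟩
  exact join_preexp_of_isSingleExpansionOfMonomial hx hy

lemma join_preexp_sum_of_rel {m : Multiset (FreeMonoid A)} {n₁ n₂ : Multiset (FreeSemiring' A)}
    (h₁ : m.Rel (IsSingleExpansionOrEq E) n₁) (h₂ : m.Rel (IsSingleExpansionOrEq E) n₂) :
    Relation.Join (Preexp E) n₁.sum n₂.sum := by
  induction m using Multiset.induction generalizing n₁ n₂ with
  | empty =>
    rw [Multiset.rel_zero_left] at h₁ h₂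
    exact ⟨0, h₁ ▸ Preexp.zero, h₂ ▸ Preexp.zero⟩
  | cons u m ih =>
    obtain ⟨x₁, n₁', hx₁, h₁', rfl⟩ := Multiset.rel_cons_left.mp h₁
    obtain ⟨x₂, n₂', hx₂, h₂', rfl⟩ := Multiset.rel_cons_left.mp h₂
    obtain ⟨z, hz₁, hz₂⟩ := join_preexp_of_isSingleExpansionOrEq hx₁ hx₂
    obtain ⟨s, hs₁, hs₂⟩ := ih h₁' h₂'
    exact ⟨z + s, by simpa using hz₁.add hs₁, by simpa using hz₂.add hs₂⟩

end

theorem stmt_2 {A : Type*} (E : Set (FreeSemiring' A)) (p q r : FreeSemiring' A)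
    (hp : Preexp E r p) (hq : Preexp E r q) :
    ∃ s : FreeSemiring' A, Preexp E p s ∧ Preexp E q s := by
  obtain ⟨m₁, n₁, hr₁, rfl, h₁⟩ := hp.exists_rel
  obtain ⟨m₂, n₂, hr₂, rfl, h₂⟩ := hq.exists_rel
  obtain rfl : m₁ = m₂ :=
    sumMonoEquiv.injective (by simp only [sumMonoEquiv_apply, ← hr₁, ← hr₂])
  exact join_preexp_sum_of_rel h₁ h₂
end

section
/- Fix n ≥ 5 and m ≥ 1 with 2m < n. Let L be the first-order language with a single n-ary function symbol, and let Cₙ be the L-structure with universe ℚ × ℚ in which the symbol is interpreted as the operation sending ((x₁,u₁),…,(xₙ,uₙ)) to (tᴬₙ(x₁,…,xₙ), tᴮₙ(u₁,…,uₙ)). Then: (i) this basic operation of Cₙ is a near-unanimity operation, i.e., its value on any n-tuple all of whose entries equal some c ∈ ℚ×ℚ except possibly one entry is c; and (ii) Cₙ has no (2+m)-terms. -/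
/-!
(i) Trimming at least one entry from each end discards the single deviating entry.

(ii) Write `eᵢ` for the `i`-th indicator vector. `tᴬ` is monotone, commutes with `x ↦ 1 - x`,
and is rigid: writing `tᴬ(v)` as `(∑ v - max v - min v)/(n-2)`, if `u ≤ v` and `tᴬ(u) = tᴬ(v)`
then `u` and `v` agree off two coordinates. Given `(2+m)`-terms `f, g₁, g₂`, the identities for
`g₁` together with this duality make the first coordinate of `f` take the same value on
`e₀ ≤ 1 - e₁`. Going down the term `f`, rigidity leaves at most two moving arguments at every
node where the first coordinate is frozen, and `tᴮ` trims two entries on each side, so the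
second coordinate of `f` vanishes on each `e_{2+j}`, hence so does that of `g₂` on `e_j`. But in
an `m`-ary term with `2m < n`, by pigeonhole some variable `j` is positive in at least three of
the `n` arguments of the root, so `tᴮ` of `g₂` at `e_j` is positive.
-/

/-- The trimmed mean `tᴬₙ(x) = (x₍₂₎ + ⋯ + x₍ₙ₋₁₎)/(n−2)`, where
`x₍₁₎ ≤ … ≤ x₍ₙ₎` is the increasing rearrangement of `x` (here indexed from `0`,
so it sums the sorted entries with 0-based indices `1,…,n-2`). -/
noncomputable def tA (n : ℕ) (x : Fin n → ℚ) : ℚ :=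
  (∑ i ∈ Finset.univ.filter (fun i : Fin n => 1 ≤ (i : ℕ) ∧ (i : ℕ) ≤ n - 2),
      x (Tuple.sort x i)) / ((n : ℚ) - 2)

/-- The trimmed mean `tᴮₙ(x) = (x₍₃₎ + ⋯ + x₍ₙ₋₂₎)/(n−4)`, where
`x₍₁₎ ≤ … ≤ x₍ₙ₎` is the increasing rearrangement of `x` (here indexed from `0`,
so it sums the sorted entries with 0-based indices `2,…,n-3`). -/
noncomputable def tB (n : ℕ) (x : Fin n → ℚ) : ℚ :=
  (∑ i ∈ Finset.univ.filter (fun i : Fin n => 2 ≤ (i : ℕ) ∧ (i : ℕ) ≤ n - 3),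
      x (Tuple.sort x i)) / ((n : ℚ) - 4)

open FirstOrder Language

/-- The first-order language with a single `n`-ary function symbol (and no relation
symbols). -/
def LangN (n : ℕ) : Language :=
  ⟨fun k => ULift (PLift (k = n)), fun _ => Empty⟩

/-- The structure `Cₙ` on `ℚ × ℚ`: the unique `n`-ary function symbol acts as
`((x₁,u₁),…,(xₙ,uₙ)) ↦ (tᴬₙ(x₁,…,xₙ), tᴮₙ(u₁,…,uₙ))`. -/
noncomputable def CnStruct (n : ℕ) : (LangN n).Structure (ℚ × ℚ) where
  funMap {_k} f v :=
    (tA n (fun i => (v (Fin.cast f.down.down.symm i)).1),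
     tB n (fun i => (v (Fin.cast f.down.down.symm i)).2))
  RelMap {_k} r _ := Empty.elim r

/-- `M` has `(m₁+m₂)`-terms: an idempotent `(m₁+m₂)`-ary term operation `f`, an
idempotent `m₁`-ary term operation `g₁` and an idempotent `m₂`-ary term operation
`g₂` such that `f` with `y` at position `i ≤ m₁` (and `x` elsewhere) equals `g₁` with
`y` at position `i`, and `f` with `y` at position `m₁+i` equals `g₂` with `y` at
position `i`. -/
def HasPlusTerms (L : Language) (M : Type*) [L.Structure M] (m₁ m₂ : ℕ) : Prop :=
  ∃ (f : L.Term (Fin (m₁ + m₂))) (g₁ : L.Term (Fin m₁)) (g₂ : L.Term (Fin m₂)),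
    (∀ x : M, f.realize (fun _ => x) = x) ∧
    (∀ x : M, g₁.realize (fun _ => x) = x) ∧
    (∀ x : M, g₂.realize (fun _ => x) = x) ∧
    (∀ (i : Fin m₁) (x y : M),
      f.realize (fun p => if p = Fin.castAdd m₂ i then y else x) =
      g₁.realize (fun p => if p = i then y else x)) ∧
    (∀ (i : Fin m₂) (x y : M),
      f.realize (fun p => if p = Fin.natAdd m₁ i then y else x) =
      g₂.realize (fun p => if p = i then y else x))

open Finset

namespace Tuple

variable {α : Type*} [LinearOrder α] {n : ℕ}

theorem apply_sort_le_iff (v : Fin n → α) (i : Fin n) (c : α) :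
    v (sort v i) ≤ c ↔ (i : ℕ) + #{j | c < v j} < n := by
  have hmono := monotone_sort v
  constructor
  · intro h
    have hcard : #{j | c < v j} ≤ #(Ioi i) := by
      refine card_le_card_of_injOn (sort v).symm (fun j hj => ?_) (sort v).symm.injective.injOn
      simp only [coe_filter, mem_univ, true_and, Set.mem_ofPred_eq, coe_Ioi, Set.mem_Ioi] at hj ⊢
      by_contra hle
      have := hmono (not_lt.1 hle)
      simp only [Function.comp_apply, Equiv.apply_symm_apply] at this
      exact (hj.trans_le this).not_ge h
    rw [Fin.card_Ioi] at hcard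
    omega
  · intro h
    by_contra hlt
    have hcard : #(Ici i) ≤ #{j | c < v j} := by
      refine card_le_card_of_injOn (sort v) (fun j hj => ?_) (sort v).injective.injOn
      simp only [coe_Ici, Set.mem_Ici, coe_filter, mem_univ, true_and, Set.mem_ofPred_eq] at hj ⊢
      exact (not_le.1 hlt).trans_le (hmono hj)
    rw [Fin.card_Ici] at hcard
    omega

theorem le_apply_sort_of_card_lt_le (v : Fin n → α) (i : Fin n) (c : α)
    (h : #{j | v j < c} ≤ i) : c ≤ v (sort v i) := by
  by_contra hlt
  have hcard : #(Iic i) ≤ #{j | v j < c} := by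
    refine card_le_card_of_injOn (sort v) (fun j hj => ?_) (sort v).injective.injOn
    simp only [coe_Iic, Set.mem_Iic, coe_filter, mem_univ, true_and, Set.mem_ofPred_eq] at hj ⊢
    exact (monotone_sort v hj).trans_lt (not_le.1 hlt)
  rw [Fin.card_Iic] at hcard
  omega

end Tuple

section TrimmedSum

variable {n : ℕ}

def trimmedSum (k : ℕ) (v : Fin n → ℚ) : ℚ :=
  ∑ i ∈ {i : Fin n | k ≤ (i : ℕ) ∧ (i : ℕ) + k < n}, v (Tuple.sort v i)

theorem card_filter_le_val_and_val_add_lt (k : ℕ) :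
    #{i : Fin n | k ≤ (i : ℕ) ∧ (i : ℕ) + k < n} = n - 2 * k := by
  have : ({i : Fin n | k ≤ (i : ℕ) ∧ (i : ℕ) + k < n} : Finset (Fin n)).map Fin.valEmbedding
      = Ico k (n - k) := by
    ext x
    simp only [mem_map, mem_filter, mem_univ, true_and, Fin.valEmbedding_apply, mem_Ico]
    exact ⟨by rintro ⟨a, h, rfl⟩; omega, fun h => ⟨⟨x, by omega⟩, by simp; omega⟩⟩
  rw [← card_map, this, Nat.card_Ico]
  omega

theorem trimmedSum_eq_of_card_ne_le {k : ℕ} {v : Fin n → ℚ} {c : ℚ}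
    (h : #{i | v i ≠ c} ≤ k) : trimmedSum k v = (n - 2 * k : ℕ) * c := by
  have hgt : #{i | c < v i} ≤ k :=
    (card_le_card fun i => by simp only [mem_filter]; exact fun h => ⟨h.1, h.2.ne'⟩).trans h
  have hlt : #{i | v i < c} ≤ k :=
    (card_le_card fun i => by simp only [mem_filter]; exact fun h => ⟨h.1, h.2.ne⟩).trans h
  rw [trimmedSum, sum_congr rfl (g := fun _ => c), sum_const, card_filter_le_val_and_val_add_lt,
    nsmul_eq_mul]
  intro i hi
  simp only [mem_filter, mem_univ, true_and] at hi
  exact le_antisymm ((Tuple.apply_sort_le_iff v i c).2 (by omega))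
    (Tuple.le_apply_sort_of_card_lt_le v i c (by omega))

theorem trimmedSum_pos {k : ℕ} {v : Fin n → ℚ} (hk : 2 * k < n) (hv : 0 ≤ v)
    (h : k < #{i | 0 < v i}) : 0 < trimmedSum k v := by
  refine sum_pos' (fun i _ => hv _) ⟨⟨n - k - 1, by omega⟩, by simp; omega, ?_⟩
  exact not_le.1 fun hle => by have := (Tuple.apply_sort_le_iff v _ 0).1 hle; simp at this; omega

theorem trimmedSum_one_eq (hn : 2 ≤ n) (v : Fin n → ℚ) :
    ∃ j l, j ≠ l ∧ (∀ i, v l ≤ v i ∧ v i ≤ v j) ∧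
      trimmedSum 1 v = ∑ i, v i - v j - v l := by
  set σ := Tuple.sort v
  let first : Fin n := ⟨0, by omega⟩
  let last : Fin n := ⟨n - 1, by omega⟩
  have hfl : first ≠ last := by simp [first, last, Fin.ext_iff]; omega
  have hmono : ∀ i, v (σ first) ≤ v i ∧ v i ≤ v (σ last) := fun i => by
    rw [← σ.apply_symm_apply i]
    exact ⟨Tuple.monotone_sort v (Fin.le_iff_val_le_val.2 (Nat.zero_le _)),
      Tuple.monotone_sort v (Fin.le_iff_val_le_val.2 (by simp [last]; omega))⟩
  have hends : ({i : Fin n | ¬(1 ≤ (i : ℕ) ∧ (i : ℕ) + 1 < n)} : Finset (Fin n)) =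
      {first, last} := by
    ext i
    simp only [mem_filter, mem_univ, true_and, mem_insert, mem_singleton, Fin.ext_iff, first, last]
    omega
  refine ⟨σ last, σ first, σ.injective.ne hfl.symm, hmono, ?_⟩
  have hsplit := sum_filter_add_sum_filter_not univ
    (fun i : Fin n => 1 ≤ (i : ℕ) ∧ (i : ℕ) + 1 < n) (fun i => v (σ i))
  rw [hends, sum_pair hfl, Equiv.sum_comp σ v] at hsplit
  rw [trimmedSum]
  linarith

theorem exists_sum_compl_pair_le_trimmedSum_one_sub (hn : 2 ≤ n) (u v : Fin n → ℚ) :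
    ∃ j l, ∑ i ∈ {j, l}ᶜ, (v i - u i) ≤ trimmedSum 1 v - trimmedSum 1 u := by
  obtain ⟨jv, lv, -, hv, hsv⟩ := trimmedSum_one_eq hn v
  obtain ⟨ju, lu, hjlu, hu, hsu⟩ := trimmedSum_one_eq hn u
  obtain ⟨j, l, hjl, hle⟩ :
      ∃ j l, j ≠ l ∧ v jv + v lv - (u ju + u lu) ≤ v j - u j + (v l - u l) := by
    by_cases h : lu = jv
    · subst h
      exact ⟨lu, ju, hjlu.symm, by linarith [(hv ju).1, (hu ju).2]⟩
    · exact ⟨jv, lu, Ne.symm h, by linarith [(hu jv).2, (hv lu).1]⟩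
  refine ⟨j, l, ?_⟩
  have hsplit := sum_add_sum_compl {j, l} (fun i => v i - u i)
  rw [sum_pair hjl] at hsplit
  linarith [sum_sub_distrib (s := univ) v u]

theorem trimmedSum_one_const_sub (hn : 2 ≤ n) (c : ℚ) (v : Fin n → ℚ) :
    trimmedSum 1 (fun i => c - v i) = (n - 2) * c - trimmedSum 1 v := by
  obtain ⟨j, l, -, hv, hsv⟩ := trimmedSum_one_eq hn v
  obtain ⟨j', l', -, hw, hsw⟩ := trimmedSum_one_eq hn (fun i => c - v i)
  have hmin : v j' = v l := le_antisymm (by linarith [(hw l).2]) (hv j').1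
  have hmax : v l' = v j := le_antisymm (hv l').2 (by linarith [(hw j).1])
  rw [hsw, hsv, sum_sub_distrib, sum_const, card_univ, Fintype.card_fin, nsmul_eq_mul]
  linarith

end TrimmedSum

section TrimmedMeans

variable {n : ℕ}

theorem tA_eq_trimmedSum (v : Fin n → ℚ) : tA n v = trimmedSum 1 v / (n - 2) := by
  rw [tA, trimmedSum]
  congr 2
  exact filter_congr fun i _ => by omega

theorem tB_eq_trimmedSum (v : Fin n → ℚ) : tB n v = trimmedSum 2 v / (n - 4) := by
  rw [tB, trimmedSum]
  congr 2
  exact filter_congr fun i _ => by omega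

theorem tA_eq_of_card_ne_le_one (hn : 2 < n) {v : Fin n → ℚ} {c : ℚ}
    (h : #{i | v i ≠ c} ≤ 1) : tA n v = c := by
  have : (n : ℚ) - 2 ≠ 0 := by rw [sub_ne_zero]; exact_mod_cast hn.ne'
  rw [tA_eq_trimmedSum, trimmedSum_eq_of_card_ne_le h, Nat.cast_sub (by omega)]
  field_simp
  ring

theorem tB_eq_of_card_ne_le_two (hn : 4 < n) {v : Fin n → ℚ} {c : ℚ}
    (h : #{i | v i ≠ c} ≤ 2) : tB n v = c := by
  have : (n : ℚ) - 4 ≠ 0 := by rw [sub_ne_zero]; exact_mod_cast hn.ne'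
  rw [tB_eq_trimmedSum, trimmedSum_eq_of_card_ne_le h, Nat.cast_sub (by omega)]
  field_simp
  ring

theorem tB_nonneg (hn : 4 < n) {v : Fin n → ℚ} (hv : 0 ≤ v) : 0 ≤ tB n v := by
  have : (4 : ℚ) < n := by exact_mod_cast hn
  rw [tB_eq_trimmedSum]
  exact div_nonneg (sum_nonneg fun i _ => hv _) (by linarith)

theorem tB_pos (hn : 4 < n) {v : Fin n → ℚ} (hv : 0 ≤ v) (h : 2 < #{i | 0 < v i}) :
    0 < tB n v := by
  have : (4 : ℚ) < n := by exact_mod_cast hn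
  rw [tB_eq_trimmedSum]
  exact div_pos (trimmedSum_pos (by omega) hv h) (by linarith)

theorem tA_monotone (hn : 2 < n) : Monotone (tA n) := by
  intro u v huv
  have : (2 : ℚ) < n := by exact_mod_cast hn
  obtain ⟨j, l, hle⟩ := exists_sum_compl_pair_le_trimmedSum_one_sub hn.le u v
  rw [tA_eq_trimmedSum, tA_eq_trimmedSum]
  gcongr
  linarith [sum_nonneg fun i (_ : i ∈ ({j, l} : Finset (Fin n))ᶜ) => sub_nonneg.2 (huv i)]

theorem exists_eq_of_tA_eq (hn : 2 < n) {u v : Fin n → ℚ} (huv : u ≤ v)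
    (h : tA n u = tA n v) : ∃ j l, ∀ i, i ≠ j → i ≠ l → u i = v i := by
  have : (2 : ℚ) < n := by exact_mod_cast hn
  obtain ⟨j, l, hle⟩ := exists_sum_compl_pair_le_trimmedSum_one_sub hn.le u v
  rw [tA_eq_trimmedSum, tA_eq_trimmedSum, div_left_inj' (by linarith)] at h
  have hzero := (sum_eq_zero_iff_of_nonneg fun i _ => sub_nonneg.2 (huv i)).1
    (le_antisymm (by linarith) (sum_nonneg fun i _ => sub_nonneg.2 (huv i)))
  refine ⟨j, l, fun i hj hl => ?_⟩
  have := hzero i (by simp [hj, hl])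
  linarith

theorem tA_const_sub (hn : 2 < n) (c : ℚ) (v : Fin n → ℚ) :
    tA n (fun i => c - v i) = c - tA n v := by
  have : (n : ℚ) - 2 ≠ 0 := by rw [sub_ne_zero]; exact_mod_cast hn.ne'
  rw [tA_eq_trimmedSum, tA_eq_trimmedSum, trimmedSum_one_const_sub hn.le]
  field_simp

end TrimmedMeans

namespace LangN

variable {n : ℕ} {α M N : Type*}

def structureOf (op : (Fin n → M) → M) : (LangN n).Structure M where
  funMap f v := op fun i => v (Fin.cast f.down.down.symm i)
  RelMap r _ := Empty.elim r

def realize (op : (Fin n → M) → M) (w : α → M) (t : (LangN n).Term α) : M :=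
  @Term.realize (LangN n) M (structureOf op) α w t

theorem realize_func (op : (Fin n → M) → M) (w : α → M) (ts : Fin n → (LangN n).Term α) :
    realize op w (Term.func ⟨⟨rfl⟩⟩ ts) = op fun i => realize op w (ts i) :=
  rfl

theorem realize_comp {op : (Fin n → M) → M} {op' : (Fin n → N) → N} {φ : M → N}
    (hφ : ∀ w, φ (op w) = op' (φ ∘ w)) (w : α → M) (t : (LangN n).Term α) :
    realize op' (φ ∘ w) t = φ (realize op w t) := by
  induction t with
  | var a => rfl
  | func f ts ih =>
    obtain ⟨⟨rfl⟩⟩ := f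
    simp only [realize_func, hφ]
    exact congrArg op' (funext ih)

theorem realize_mem {op : (Fin n → M) → M} {S : Set M}
    (hS : ∀ w, (∀ i, w i ∈ S) → op w ∈ S) {w : α → M} (hw : ∀ a, w a ∈ S)
    (t : (LangN n).Term α) : realize op w t ∈ S := by
  induction t with
  | var a => exact hw a
  | func f ts ih =>
    obtain ⟨⟨rfl⟩⟩ := f
    exact hS _ ih

theorem realize_monotone [Preorder M] {op : (Fin n → M) → M} (hop : Monotone op)
    (t : (LangN n).Term α) : Monotone fun w : α → M => realize op w t := by
  intro u v huv
  induction t with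
  | var a => exact huv a
  | func f ts ih =>
    obtain ⟨⟨rfl⟩⟩ := f
    exact hop ih

theorem realize_cnStruct (w : α → ℚ × ℚ) (t : (LangN n).Term α) :
    @Term.realize _ _ (CnStruct n) _ w t =
      (realize (tA n) (Prod.fst ∘ w) t, realize (tB n) (Prod.snd ∘ w) t) :=
  let op w := (tA n (Prod.fst ∘ w), tB n (Prod.snd ∘ w))
  Prod.ext (realize_comp (op := op) (fun _ => rfl) w t).symm
    (realize_comp (op := op) (fun _ => rfl) w t).symm

theorem realize_cnStruct_ite {k : ℕ} (t : (LangN n).Term (Fin k)) (a : Fin k) (x y : ℚ) :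
    @Term.realize _ _ (CnStruct n) _ (fun p => if p = a then (y, y) else (x, x)) t =
      (realize (tA n) (fun p => if p = a then y else x) t,
        realize (tB n) (fun p => if p = a then y else x) t) := by
  rw [realize_cnStruct]
  congr <;> ext p <;> simp only [Function.comp_apply, apply_ite Prod.fst, apply_ite Prod.snd]

theorem realize_tA_const_sub (hn : 2 < n) (c : ℚ) (w : α → ℚ) (t : (LangN n).Term α) :
    realize (tA n) (fun a => c - w a) t = c - realize (tA n) w t :=
  realize_comp (fun w => (tA_const_sub hn c w).symm) w t

theorem realize_tB_nonneg (hn : 4 < n) {w : α → ℚ} (hw : 0 ≤ w) (t : (LangN n).Term α) :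
    0 ≤ realize (tB n) w t :=
  Set.mem_Ici.1 (realize_mem (S := Set.Ici 0) (fun _ => tB_nonneg hn) (fun a => hw a) t)

/-- At a node where the `tA`-value does not move, by rigidity of `tA` at most two arguments
move, and `tB` discards two entries on each side. -/
theorem realize_tB_eq_zero_of_realize_tA_eq (hn : 4 < n) (t : (LangN n).Term α)
    {u v χ : α → ℚ} (huv : u ≤ v) (hχ : ∀ a, u a = v a → χ a = 0)
    (h : realize (tA n) u t = realize (tA n) v t) : realize (tB n) χ t = 0 := by
  induction t with
  | var a => exact hχ a h
  | func f ts ih =>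
    obtain ⟨⟨rfl⟩⟩ := f
    rw [realize_func] at h ⊢
    obtain ⟨j, l, hjl⟩ := exists_eq_of_tA_eq (by omega)
      (fun i => realize_monotone (tA_monotone (by omega)) (ts i) huv) h
    refine tB_eq_of_card_ne_le_two hn
      ((card_le_card (t := {j, l}) fun i hi => ?_).trans card_le_two)
    simp only [mem_filter, mem_univ, true_and, mem_insert, mem_singleton] at hi ⊢
    by_contra! hne
    exact hi (ih i (hjl i hne.1 hne.2))

theorem exists_realize_tB_single_pos (hn : 4 < n) {m : ℕ} (h2m : 2 * m < n)
    (t : (LangN n).Term (Fin m)) :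
    ∃ j, 0 < realize (tB n) (fun p => if p = j then 1 else 0) t := by
  induction t with
  | var a => exact ⟨a, by simp [realize]⟩
  | func f ts ih =>
    obtain ⟨⟨rfl⟩⟩ := f
    choose J hJ using ih
    obtain ⟨j, hj⟩ := Fintype.exists_lt_card_fiber_of_mul_lt_card J (n := 2)
      (by simpa [mul_comm] using h2m)
    refine ⟨j, ?_⟩
    rw [realize_func]
    refine tB_pos hn (fun i => realize_tB_nonneg hn (fun p => by split_ifs <;> norm_num) (ts i))
      (hj.trans_le (card_le_card fun i hi => ?_))
    simp only [mem_filter, mem_univ, true_and] at hi ⊢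
    exact hi ▸ hJ i

theorem not_hasPlusTerms_two (hn : 4 < n) {m : ℕ} (h2m : 2 * m < n) :
    ¬ @HasPlusTerms (LangN n) (ℚ × ℚ) (CnStruct n) 2 m := by
  rintro ⟨f, g₁, g₂, -, -, -, h₁, h₂⟩
  have hA (i : Fin 2) : realize (tA n) (fun p => if p = Fin.castAdd m i then 1 else 0) f =
      realize (tA n) (fun p => if p = i then 1 else 0) g₁ := by
    simpa only [realize_cnStruct_ite] using congrArg Prod.fst (h₁ i (0, 0) (1, 1))
  have hB (j : Fin m) : realize (tB n) (fun p => if p = Fin.natAdd 2 j then 1 else 0) f =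
      realize (tB n) (fun p => if p = j then 1 else 0) g₂ := by
    simpa only [realize_cnStruct_ite] using congrArg Prod.snd (h₂ j (0, 0) (1, 1))
  -- Duality in `g₁` makes the `tA`-value of `f` the same on `u ≤ v`, which differ exactly at the
  -- last `m` positions.
  set u : Fin (2 + m) → ℚ := fun p => if p = Fin.castAdd m 0 then 1 else 0
  set v : Fin (2 + m) → ℚ := fun p => 1 - if p = Fin.castAdd m 1 then 1 else 0
  have hsat : realize (tA n) u f = realize (tA n) v f := by
    have hdual : (fun p : Fin 2 => if p = 1 then (1 : ℚ) else 0) =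
        fun p => 1 - if p = 0 then 1 else 0 := by
      ext p; fin_cases p <;> simp
    rw [realize_tA_const_sub (by omega), hA, hA, hdual, realize_tA_const_sub (by omega)]
    ring
  obtain ⟨j, hj⟩ := exists_realize_tB_single_pos hn h2m g₂
  refine hj.ne' ((hB j).symm.trans (realize_tB_eq_zero_of_realize_tA_eq hn f ?_ ?_ hsat))
  · intro p
    simp only [u, v]
    split_ifs <;> simp_all
  · intro p hp
    have h0 : Fin.natAdd 2 j ≠ Fin.castAdd m 0 := by simp [Fin.ext_iff]
    have h1 : Fin.natAdd 2 j ≠ Fin.castAdd m 1 := by simp [Fin.ext_iff]; omega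
    rcases eq_or_ne p (Fin.natAdd 2 j) with rfl | hpj
    · simp [u, v, h0, h1] at hp
    · simp [hpj]

end LangN

theorem stmt_17 (n m : ℕ) (hn : 5 ≤ n) (hm : 1 ≤ m) (h2m : 2 * m < n) :
    -- (i) the basic operation of `Cₙ` is a near-unanimity operation
    (∀ (c d : ℚ × ℚ) (i : Fin n),
      (CnStruct n).funMap (⟨⟨rfl⟩⟩ : ULift (PLift (n = n)))
        (Function.update (fun _ => c) i d) = c) ∧
    -- (ii) `Cₙ` has no `(2+m)`-terms
    ¬ @HasPlusTerms (LangN n) (ℚ × ℚ) (CnStruct n) 2 m := by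
  refine ⟨fun c d i => ?_, LangN.not_hasPlusTerms_two (by omega) h2m⟩
  have hne (φ : ℚ × ℚ → ℚ) :
      #{j | φ (Function.update (fun _ => c) i d j) ≠ φ c} ≤ 1 :=
    (card_le_card fun j hj => by by_contra hji; simp_all).trans (card_singleton i).le
  exact Prod.ext (tA_eq_of_card_ne_le_one (by omega) (hne Prod.fst))
    (tB_eq_of_card_ne_le_two (by omega) ((hne Prod.snd).trans one_le_two))
end
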